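/- Let P*_n(x,z) = Σ_{σ ∈ S_n} x^{jump(σ)} z^{lsuc(σ)} and F_n(x,z) = Σ_{σ ∈ S_n} x^{exc(σ)} z^{fix(σ)}. Then P*_n(x,z) = F_n(x,z) for all n ≥ 0 as polynomials in ℤ[x,z]. -/

import Mathlib

/-!
Both pairs of statistics obey the same recursion. Every permutation of `n + 1` letters arises
exactly once by inserting a new letter into one of the `n + 1` slots of a permutation of `n`
letters, and if the latter has statistics `(a, b)`, its children have statistics `(a, b + 1)` once,
`(a, b)` `a` times, `(a + 1, b - 1)` `b` times and `(a + 1, b)` in the remaining `n - a - b` slots.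

For `(jump, lsuc)` the new largest letter `n + 1` goes into the one-line word `0 σ(1) … σ(n) 0`,
replacing an adjacent pair `(u, v)` by `(u, n + 1), (n + 1, v)`: the first is a succession if
`u = n` and a jump otherwise, the second is neither. For `(exc, fix)` a new smallest point `0` goes
into the cycle structure, either as a fixed point or replacing an arrow `x ↦ σ x` by
`x ↦ 0 ↦ σ x`, of which only the second is an excedance.

Hence a sum of `φ (stat τ)` over permutations of `n + 1` letters is a sum over permutations of `n`
letters of one and the same function of the statistics, and the two distributions agree for every
weight `φ` by induction on `n`.
-/

open Finset

/-- The value `σ(i)` of a permutation of `{1,…,n}` at a one-based position `i`,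
with the convention `σ(0) = 0` (and value `0` outside `[1,n]`). -/
def pv {n : ℕ} (σ : Equiv.Perm (Fin n)) (i : ℕ) : ℕ :=
  if h : 1 ≤ i ∧ i ≤ n then ((σ ⟨i - 1, by omega⟩ : Fin n) : ℕ) + 1 else 0

/-- Number of excedances: indices `i` with `σ(i) > i`. -/
def exc {n : ℕ} (σ : Equiv.Perm (Fin n)) : ℕ :=
  ((Finset.Icc 1 n).filter (fun i => i < pv σ i)).card

/-- Number of fixed points: indices `i` with `σ(i) = i`. -/
def fixpt {n : ℕ} (σ : Equiv.Perm (Fin n)) : ℕ :=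
  ((Finset.Icc 1 n).filter (fun i => pv σ i = i)).card

/-- Number of left successions: indices `1 ≤ i ≤ n` with `σ(i-1) + 1 = σ(i)`. -/
def lsuc {n : ℕ} (σ : Equiv.Perm (Fin n)) : ℕ :=
  ((Finset.Icc 1 n).filter (fun i => pv σ (i - 1) + 1 = pv σ i)).card

/-- Number of jumps: indices `1 ≤ i ≤ n` with `σ(i) ≥ σ(i-1) + 2`. -/
def jump {n : ℕ} (σ : Equiv.Perm (Fin n)) : ℕ :=
  ((Finset.Icc 1 n).filter (fun i => pv σ (i - 1) + 2 ≤ pv σ i)).card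

open MvPolynomial

/-- `P*_n(x,z) = Σ_{σ ∈ S_n} x^{jump σ} z^{lsuc σ}` with `x = X 0`, `z = X 1`. -/
noncomputable def Pstar (n : ℕ) : MvPolynomial (Fin 2) ℤ :=
  ∑ σ : Equiv.Perm (Fin n), X 0 ^ jump σ * X 1 ^ lsuc σ

/-- `F_n(x,z) = Σ_{σ ∈ S_n} x^{exc σ} z^{fix σ}`. -/
noncomputable def Fxz (n : ℕ) : MvPolynomial (Fin 2) ℤ :=
  ∑ σ : Equiv.Perm (Fin n), X 0 ^ exc σ * X 1 ^ fixpt σ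

open Equiv Equiv.Perm

section Words

variable {M : Type*} [AddCommMonoid M]

def adjCount (R : ℕ → ℕ → Prop) [DecidableRel R] (w : ℕ → ℕ) (m : ℕ) : ℕ :=
  #{s ∈ Icc 1 m | R (w (s - 1)) (w s)}

-- Words are read from index `1`, index `0` holding the sentinel `σ(0) = 0`;
-- `insertAt w i v` puts the letter `v` at index `i + 1`.
def insertAt (w : ℕ → ℕ) (i v : ℕ) (s : ℕ) : ℕ :=
  if s ≤ i then w s else if s = i + 1 then v else w (s - 1)

theorem sum_Icc_one_eq_sum_range (f : ℕ → M) (m : ℕ) :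
    ∑ s ∈ Icc 1 m, f s = ∑ s ∈ range m, f (s + 1) := by
  rw [← Ico_add_one_right_eq_Icc, sum_Ico_eq_sum_range, Nat.add_sub_cancel]
  simp only [add_comm 1]

theorem adjCount_eq_card_range {R : ℕ → ℕ → Prop} [DecidableRel R] (hR : ∀ a, ¬ R a 0)
    {w : ℕ → ℕ} {m : ℕ} (hw : w (m + 1) = 0) :
    adjCount R w m = #{s ∈ range (m + 1) | R (w s) (w (s + 1))} := by
  rw [adjCount, card_filter, card_filter, sum_Icc_one_eq_sum_range, sum_range_succ, hw,
    if_neg (hR _), add_zero]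
  simp only [Nat.add_sub_cancel]

theorem insertAt_add_one_self (w : ℕ → ℕ) (i v : ℕ) : insertAt w i v (i + 1) = v := by
  simp [insertAt]

theorem insertAt_succAbove_add_one (w : ℕ → ℕ) {m : ℕ} (i : Fin (m + 1)) (j : Fin m)
    (v : ℕ) :
    insertAt w i v (i.succAbove j + 1) = w (j + 1) := by
  rcases lt_or_ge j.castSucc i with h | h
  · rw [Fin.succAbove_of_castSucc_lt _ _ h, Fin.val_castSucc, insertAt,
      if_pos (by simpa [Fin.lt_def] using h)]
  · have h' : (i : ℕ) ≤ j := by simpa [Fin.le_def] using h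
    rw [Fin.succAbove_of_le_castSucc _ _ h, Fin.val_succ, insertAt,
      if_neg (by omega), if_neg (by omega), Nat.add_sub_cancel]

-- Summing up to the pair `(w m, w (m + 1))` past the end of the word avoids a boundary
-- case.
theorem sum_range_insertAt (f : ℕ → ℕ → M) (w : ℕ → ℕ) {i m : ℕ} (v : ℕ) (h : i ≤ m) :
    ∑ s ∈ range (m + 2), f (insertAt w i v s) (insertAt w i v (s + 1)) + f (w i) (w (i + 1))
      = ∑ s ∈ range (m + 1), f (w s) (w (s + 1)) + f (w i) v + f v (w (i + 1)) := by
  induction m, h using Nat.le_induction with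
  | base =>
    have hlow : ∀ s ∈ range i,
        f (insertAt w i v s) (insertAt w i v (s + 1)) = f (w s) (w (s + 1)) := by
      intro s hs
      have hsi := mem_range.1 hs
      simp only [insertAt, if_pos hsi.le, if_pos (show s + 1 ≤ i by omega)]
    have hi : insertAt w i v i = w i := if_pos le_rfl
    have hi2 : insertAt w i v (i + 1 + 1) = w (i + 1) := by simp [insertAt]
    rw [sum_range_succ, sum_range_succ, sum_range_succ, sum_congr rfl hlow, hi,
      insertAt_add_one_self, hi2]
    abel
  | succ m hm ih =>
    have hlast : ∀ s, m + 2 ≤ s → insertAt w i v s = w (s - 1) := by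
      intro s hs
      simp only [insertAt, if_neg (show ¬ s ≤ i by omega), if_neg (show s ≠ i + 1 by omega)]
    rw [sum_range_succ (fun s => f (insertAt w i v s) (insertAt w i v (s + 1))) (m + 2),
      sum_range_succ (fun s => f (w s) (w (s + 1))) (m + 1), add_right_comm, ih,
      hlast _ le_rfl, hlast _ (by omega)]
    simp only [Nat.add_sub_cancel]
    abel

theorem adjCount_insertAt {R : ℕ → ℕ → Prop} [DecidableRel R] (hR : ∀ a, ¬ R a 0)
    {w : ℕ → ℕ} {i m : ℕ} (v : ℕ) (hw : w (m + 1) = 0) (h : i ≤ m) :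
    adjCount R (insertAt w i v) (m + 1) + (if R (w i) (w (i + 1)) then 1 else 0)
      = adjCount R w m + (if R (w i) v then 1 else 0) + (if R v (w (i + 1)) then 1 else 0) := by
  have hw' : insertAt w i v (m + 1 + 1) = 0 := by
    simp only [insertAt, if_neg (show ¬ m + 1 + 1 ≤ i by omega),
      if_neg (show m + 1 + 1 ≠ i + 1 by omega), Nat.add_sub_cancel, hw]
  rw [adjCount_eq_card_range hR hw, adjCount_eq_card_range hR hw', card_filter, card_filter]
  exact sum_range_insertAt (fun a b => if R a b then 1 else 0) w v h

-- The total weight of the `m + 1` children of a permutation of `m` letters with statistics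
-- `(a, b)`.
def stepSum (φ : ℕ → ℕ → M) (m a b : ℕ) : M :=
  φ a (b + 1) + a • φ a b + b • φ (a + 1) (b - 1) + (m - a - b) • φ (a + 1) b

theorem add_sum_eq_stepSum {ι : Type*} (φ : ℕ → ℕ → M) (s : Finset ι) (J L : ι → Prop)
    [DecidablePred J] [DecidablePred L] (hJL : ∀ i ∈ s, J i → ¬ L i) {a b : ℕ}
    (ha : #{i ∈ s | J i} = a) (hb : #{i ∈ s | L i} = b) :
    φ a (b + 1) + ∑ i ∈ s, φ (if J i then a else a + 1) (if L i then b - 1 else b)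
      = stepSum φ #s a b := by
  have hterm : ∀ i ∈ s, φ (if J i then a else a + 1) (if L i then b - 1 else b)
      = if J i then φ a b else if L i then φ (a + 1) (b - 1) else φ (a + 1) b := by
    intro i hi
    by_cases hJ : J i
    · simp [hJ, hJL i hi hJ]
    · by_cases hL : L i <;> simp [hJ, hL]
  have hL : #{i ∈ s | ¬ J i ∧ L i} = b := by
    rw [← hb]
    exact congrArg card
      (filter_congr fun i hi => ⟨And.right, fun hL => ⟨fun hJ => hJL i hi hJ hL, hL⟩⟩)
  have hrest : #{i ∈ s | ¬ J i ∧ ¬ L i} = #s - a - b := by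
    have h1 : a + #{i ∈ s | ¬ J i} = #s := by
      rw [← ha]; exact card_filter_add_card_filter_not _
    have h2 : b + #{i ∈ s | ¬ J i ∧ ¬ L i} = #{i ∈ s | ¬ J i} := by
      rw [← hL, ← filter_filter, ← filter_filter]; exact card_filter_add_card_filter_not _
    omega
  rw [sum_congr rfl hterm, sum_ite, sum_ite, filter_filter, filter_filter, sum_const, sum_const,
    sum_const, ha, hL, hrest, stepSum]
  abel

theorem adjCount_add_two_le_insertAt_max {w : ℕ → ℕ} {m s : ℕ} (hle : ∀ t, w t ≤ m)
    (hw : w (m + 1) = 0) (hs : s ≤ m) :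
    adjCount (· + 2 ≤ ·) (insertAt w s (m + 1)) (m + 1)
      = if w s = m ∨ w s + 2 ≤ w (s + 1) then adjCount (· + 2 ≤ ·) w m
        else adjCount (· + 2 ≤ ·) w m + 1 := by
  have h := adjCount_insertAt (R := (· + 2 ≤ ·)) (by omega) (m + 1) hw hs
  have := hle s
  have := hle (s + 1)
  split_ifs at h ⊢ <;> omega

theorem adjCount_add_one_eq_insertAt_max {w : ℕ → ℕ} {m s : ℕ} (hle : ∀ t, w t ≤ m)
    (hw : w (m + 1) = 0) (hs : s ≤ m) :
    adjCount (· + 1 = ·) (insertAt w s (m + 1)) (m + 1)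
      = if w s = m then adjCount (· + 1 = ·) w m + 1
        else if w s + 1 = w (s + 1) then adjCount (· + 1 = ·) w m - 1
        else adjCount (· + 1 = ·) w m := by
  have h := adjCount_insertAt (R := (· + 1 = ·)) (by omega) (m + 1) hw hs
  have := hle s
  have := hle (s + 1)
  split_ifs at h ⊢ <;> omega

theorem sum_insertAt_max_eq_stepSum (φ : ℕ → ℕ → M) {w : ℕ → ℕ} {m : ℕ}
    (hle : ∀ s, w s ≤ m) (hw : w (m + 1) = 0) (hmax : #{s ∈ range (m + 1) | w s = m} = 1) :
    ∑ s ∈ range (m + 1), φ (adjCount (· + 2 ≤ ·) (insertAt w s (m + 1)) (m + 1))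
        (adjCount (· + 1 = ·) (insertAt w s (m + 1)) (m + 1))
      = stepSum φ m (adjCount (· + 2 ≤ ·) w m) (adjCount (· + 1 = ·) w m) := by
  set j := adjCount (· + 2 ≤ ·) w m
  set l := adjCount (· + 1 = ·) w m
  have hslot : ∀ s ∈ range (m + 1),
      φ (adjCount (· + 2 ≤ ·) (insertAt w s (m + 1)) (m + 1))
        (adjCount (· + 1 = ·) (insertAt w s (m + 1)) (m + 1))
      = if w s = m then φ j (l + 1) else φ (if w s + 2 ≤ w (s + 1) then j else j + 1)
          (if w s + 1 = w (s + 1) then l - 1 else l) := by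
    intro s hs
    have hs : s ≤ m := Nat.lt_succ_iff.1 (mem_range.1 hs)
    rw [adjCount_add_two_le_insertAt_max hle hw hs, adjCount_add_one_eq_insertAt_max hle hw hs]
    by_cases hZ : w s = m <;> simp [hZ, j, l]
  have hcard : #{s ∈ range (m + 1) | ¬ w s = m} = m := by
    have := card_filter_add_card_filter_not (s := range (m + 1)) (fun s => w s = m)
    rw [hmax, card_range] at this
    omega
  have hcount : ∀ (R : ℕ → ℕ → Prop) [DecidableRel R], (∀ a, ¬ R a 0) → (∀ a ≤ m, ¬ R m a) →
      #{s ∈ {s ∈ range (m + 1) | ¬ w s = m} | R (w s) (w (s + 1))} = adjCount R w m := by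
    intro R _ hR0 hRm
    rw [filter_filter, adjCount_eq_card_range hR0 hw]
    exact congrArg card (filter_congr fun s _ =>
      ⟨And.right, fun h => ⟨fun hZ => hRm _ (hle _) (hZ ▸ h), h⟩⟩)
  rw [sum_congr rfl hslot, sum_ite, sum_const, hmax, one_smul,
    add_sum_eq_stepSum φ _ _ _ (fun s _ h1 h2 => by omega)
      (hcount _ (by omega) fun a ha => by omega) (hcount _ (by omega) fun a ha => by omega),
    hcard]

end Words

section Permutations

variable {M : Type*} [AddCommMonoid M] {n : ℕ}

theorem pv_zero (σ : Perm (Fin n)) : pv σ 0 = 0 := rfl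

theorem pv_of_lt (σ : Perm (Fin n)) {s : ℕ} (h : n < s) : pv σ s = 0 :=
  dif_neg (by omega)

theorem pv_le (σ : Perm (Fin n)) (s : ℕ) : pv σ s ≤ n := by
  unfold pv
  split
  · exact (σ _).isLt
  · omega

theorem pv_succ (σ : Perm (Fin n)) (k : Fin n) : pv σ (k + 1) = σ k + 1 :=
  dif_pos ⟨by omega, k.isLt⟩

theorem sum_range_comp_pv (σ : Perm (Fin n)) (g : ℕ → M) :
    ∑ s ∈ range (n + 1), g (pv σ s) = ∑ s ∈ range (n + 1), g s := by
  rw [sum_range_succ', sum_range_succ' g, pv_zero,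
    ← Fin.sum_univ_eq_sum_range (fun s => g (pv σ (s + 1))),
    ← Fin.sum_univ_eq_sum_range (fun s => g (s + 1))]
  simp only [pv_succ]
  rw [Equiv.sum_comp σ (fun k => g (k + 1))]

theorem card_filter_Icc_pv (σ : Perm (Fin n)) (R : ℕ → ℕ → Prop) [DecidableRel R] :
    #{i ∈ Icc 1 n | R i (pv σ i)} = #{k : Fin n | R (k + 1) (σ k + 1)} := by
  rw [card_filter, card_filter, sum_Icc_one_eq_sum_range,
    ← Fin.sum_univ_eq_sum_range (fun s => if R (s + 1) (pv σ (s + 1)) then 1 else 0)]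
  simp only [pv_succ]

theorem exc_eq_card (σ : Perm (Fin n)) : exc σ = #{k | k < σ k} :=
  (card_filter_Icc_pv σ (· < ·)).trans <| by
    simp only [Nat.add_lt_add_iff_right, Fin.val_fin_lt]

theorem fixpt_eq_card (σ : Perm (Fin n)) : fixpt σ = #{k | σ k = k} :=
  (card_filter_Icc_pv σ (fun i v => v = i)).trans (by simp [Fin.ext_iff])

theorem jump_eq_adjCount (σ : Perm (Fin n)) : jump σ = adjCount (· + 2 ≤ ·) (pv σ) n := rfl

theorem lsuc_eq_adjCount (σ : Perm (Fin n)) : lsuc σ = adjCount (· + 1 = ·) (pv σ) n := rfl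

theorem sum_decomposeFin_symm_zero (f : Fin n.succ → Fin n.succ → M) (e : Perm (Fin n)) :
    ∑ k, f k (decomposeFin.symm (0, e) k) = f 0 0 + ∑ k, f k.succ (e k).succ := by
  simp [Fin.sum_univ_succ]

-- `decomposeFin.symm ((e x).succ, e)` is `e` with the new point `0` inserted between `x`
-- and `e x`.
theorem sum_decomposeFin_symm_succ (f : Fin n.succ → Fin n.succ → M) (e : Perm (Fin n))
    (x : Fin n) :
    ∑ k, f k (decomposeFin.symm ((e x).succ, e) k) + f x.succ (e x).succ
      = f 0 (e x).succ + f x.succ 0 + ∑ k, f k.succ (e k).succ := by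
  have hrest : ∀ k ∈ univ.erase x,
      f k.succ (swap 0 (e x).succ (e k).succ) = f k.succ (e k).succ := fun k hk => by
    rw [swap_apply_of_ne_of_ne (Fin.succ_ne_zero _)
      (by simpa using ne_of_mem_erase hk)]
  simp only [Fin.sum_univ_succ, decomposeFin_symm_apply_zero, decomposeFin_symm_apply_succ]
  rw [← add_sum_erase _ _ (mem_univ x), ← add_sum_erase _ (fun k => f k.succ (e k).succ)
    (mem_univ x), swap_apply_right, sum_congr rfl hrest]
  abel

theorem exc_decomposeFin_symm_zero (e : Perm (Fin n)) :
    exc (decomposeFin.symm (0, e)) = exc e := by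
  rw [exc_eq_card, exc_eq_card, card_filter, card_filter,
    sum_decomposeFin_symm_zero (fun k l => if k < l then 1 else 0)]
  simp

theorem fixpt_decomposeFin_symm_zero (e : Perm (Fin n)) :
    fixpt (decomposeFin.symm (0, e)) = fixpt e + 1 := by
  rw [fixpt_eq_card, fixpt_eq_card, card_filter, card_filter,
    sum_decomposeFin_symm_zero (fun k l => if l = k then 1 else 0)]
  simp [add_comm]

theorem exc_decomposeFin_symm_succ (e : Perm (Fin n)) (x : Fin n) :
    exc (decomposeFin.symm ((e x).succ, e)) = if x < e x then exc e else exc e + 1 := by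
  have h := sum_decomposeFin_symm_succ (fun k l => if k < l then 1 else 0) e x
  simp only [Fin.succ_lt_succ_iff, Fin.succ_pos, Fin.not_lt_zero, if_true, if_false] at h
  rw [exc_eq_card, exc_eq_card, card_filter, card_filter]
  split_ifs at h ⊢ <;> omega

theorem fixpt_decomposeFin_symm_succ (e : Perm (Fin n)) (x : Fin n) :
    fixpt (decomposeFin.symm ((e x).succ, e)) = if e x = x then fixpt e - 1 else fixpt e := by
  have h := sum_decomposeFin_symm_succ (fun k l => if l = k then 1 else 0) e x
  simp only [Fin.succ_inj, Fin.succ_ne_zero, (Fin.succ_ne_zero _).symm, if_false] at h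
  rw [fixpt_eq_card, fixpt_eq_card, card_filter, card_filter]
  split_ifs at h ⊢ <;> omega

theorem sum_decomposeFin_symm_exc_fixpt (φ : ℕ → ℕ → M) (e : Perm (Fin n)) :
    ∑ p, φ (exc (decomposeFin.symm (p, e))) (fixpt (decomposeFin.symm (p, e)))
      = stepSum φ n (exc e) (fixpt e) := by
  rw [Fin.sum_univ_succ, exc_decomposeFin_symm_zero, fixpt_decomposeFin_symm_zero,
    ← Equiv.sum_comp e (fun y => φ (exc (decomposeFin.symm (y.succ, e)))
      (fixpt (decomposeFin.symm (y.succ, e))))]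
  simp only [exc_decomposeFin_symm_succ, fixpt_decomposeFin_symm_succ]
  rw [add_sum_eq_stepSum φ univ (fun x => x < e x) (fun x => e x = x)
    (fun x _ hlt heq => hlt.ne heq.symm) (exc_eq_card e).symm (fixpt_eq_card e).symm,
    card_univ, Fintype.card_fin]

theorem sum_exc_fixpt_succ (φ : ℕ → ℕ → M) (n : ℕ) :
    ∑ τ : Perm (Fin (n + 1)), φ (exc τ) (fixpt τ)
      = ∑ σ : Perm (Fin n), stepSum φ n (exc σ) (fixpt σ) := by
  rw [← decomposeFin.symm.sum_comp, Fintype.sum_prod_type, sum_comm]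
  exact sum_congr rfl fun e _ => sum_decomposeFin_symm_exc_fixpt φ e

-- The one-line word of `σ` with the new largest letter inserted at position `i`.
def insertMax (i : Fin (n + 1)) (σ : Perm (Fin n)) : Perm (Fin (n + 1)) :=
  i.cycleRange.trans ((finSuccEquiv n).trans (σ.optionCongr.trans finSuccEquivLast.symm))

theorem insertMax_self (i : Fin (n + 1)) (σ : Perm (Fin n)) :
    insertMax i σ i = Fin.last n := by
  simp [insertMax]

theorem insertMax_succAbove (i : Fin (n + 1)) (σ : Perm (Fin n)) (j : Fin n) :
    insertMax i σ (i.succAbove j) = (σ j).castSucc := by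
  simp [insertMax]

theorem insertMax_bijective :
    Function.Bijective fun p : Fin (n + 1) × Perm (Fin n) => insertMax p.1 p.2 := by
  refine (Fintype.bijective_iff_injective_and_card _).2 ⟨?_, ?_⟩
  · rintro ⟨i, σ⟩ ⟨i', σ'⟩ h
    simp only at h
    obtain rfl : i = i' :=
      (insertMax i σ).injective (by rw [insertMax_self, h, insertMax_self])
    refine Prod.ext rfl (Equiv.ext fun j => Fin.castSucc_injective _ ?_)
    rw [← insertMax_succAbove, ← insertMax_succAbove, h]
  · simp [Fintype.card_perm, Nat.factorial_succ]

theorem pv_insertMax (i : Fin (n + 1)) (σ : Perm (Fin n)) :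
    pv (insertMax i σ) = insertAt (pv σ) i (n + 1) := by
  funext s
  rcases s with _ | t
  · simp [pv_zero, insertAt]
  by_cases ht : t ≤ n
  · obtain ⟨k, rfl⟩ : ∃ k : Fin (n + 1), (k : ℕ) = t := ⟨⟨t, by omega⟩, rfl⟩
    rw [pv_succ]
    rcases i.eq_self_or_eq_succAbove k with rfl | ⟨j, rfl⟩
    · rw [insertMax_self, insertAt_add_one_self, Fin.val_last]
    · rw [insertMax_succAbove, Fin.val_castSucc, insertAt_succAbove_add_one, pv_succ]
  · rw [pv_of_lt _ (by omega), insertAt, if_neg (by omega), if_neg (by omega),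
      pv_of_lt _ (by omega)]

theorem card_filter_pv_eq_max (σ : Perm (Fin n)) : #{s ∈ range (n + 1) | pv σ s = n} = 1 := by
  rw [card_filter, sum_range_comp_pv σ (fun v => if v = n then 1 else 0), sum_ite_eq',
    if_pos (self_mem_range_succ n)]

theorem sum_jump_lsuc_succ (φ : ℕ → ℕ → M) (n : ℕ) :
    ∑ τ : Perm (Fin (n + 1)), φ (jump τ) (lsuc τ)
      = ∑ σ : Perm (Fin n), stepSum φ n (jump σ) (lsuc σ) := by
  rw [← Fintype.sum_bijective _ insertMax_bijective _ _ fun _ => rfl, Fintype.sum_prod_type,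
    sum_comm]
  refine sum_congr rfl fun σ _ => ?_
  simp only [jump_eq_adjCount, lsuc_eq_adjCount, pv_insertMax]
  rw [Fin.sum_univ_eq_sum_range (fun s => φ (adjCount (· + 2 ≤ ·) (insertAt (pv σ) s (n + 1))
    (n + 1)) (adjCount (· + 1 = ·) (insertAt (pv σ) s (n + 1)) (n + 1)))]
  exact sum_insertAt_max_eq_stepSum φ (pv_le σ) (pv_of_lt σ (by omega))
    (card_filter_pv_eq_max σ)

theorem sum_jump_lsuc_eq_sum_exc_fixpt (φ : ℕ → ℕ → M) (n : ℕ) :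
    ∑ σ : Perm (Fin n), φ (jump σ) (lsuc σ) = ∑ σ : Perm (Fin n), φ (exc σ) (fixpt σ) := by
  induction n generalizing φ with
  | zero => simp [jump, lsuc, exc, fixpt]
  | succ n ih => rw [sum_jump_lsuc_succ, sum_exc_fixpt_succ, ih]

end Permutations

theorem Pstar_eq_Fxz (n : ℕ) : Pstar n = Fxz n :=
  sum_jump_lsuc_eq_sum_exc_fixpt (fun a b => X 0 ^ a * X 1 ^ b) n
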